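/- In the model constructed from a tableau, role inclusions are respected: for the interpretation defined by R^I := E(R)⁺ for transitive R and R^I := E(R) ∪ ⋃_{P ⊑* R, P ≠ R} P^I otherwise, if R ⊑* S then R^I ⊆ S^I; hence I is a model of the role hierarchy R. -/

import Mathlib

namespace SHIQ

/-- Roles: role names and their inverses. -/
inductive SRole (Rn : Type) : Type where
  | name : Rn → SRole Rn
  | inv  : Rn → SRole Rn

/-- The function `Inv` on roles. -/
def SRole.Inv {Rn : Type} : SRole Rn → SRole Rn
  | .name r => .inv r
  | .inv r  => .name r

/-- The underlying role name of a (possibly inverse) role. -/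
def SRole.base {Rn : Type} : SRole Rn → Rn
  | .name r => r
  | .inv r  => r

/-- SHIQ concepts over concept names `Cn` and role names `Rn`. -/
inductive Concept (Cn Rn : Type) : Type where
  | atom : Cn → Concept Cn Rn
  | conj : Concept Cn Rn → Concept Cn Rn → Concept Cn Rn
  | disj : Concept Cn Rn → Concept Cn Rn → Concept Cn Rn
  | neg  : Concept Cn Rn → Concept Cn Rn
  | ex   : SRole Rn → Concept Cn Rn → Concept Cn Rn
  | all  : SRole Rn → Concept Cn Rn → Concept Cn Rn
  | atLeast : ℕ → SRole Rn → Concept Cn Rn → Concept Cn Rn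
  | atMost  : ℕ → SRole Rn → Concept Cn Rn → Concept Cn Rn

/-- An interpretation `I = (Δ, ·^I)`. -/
structure Interp (Cn Rn : Type) where
  Dom : Type
  dom_nonempty : Nonempty Dom
  cI : Cn → Set Dom
  rI : Rn → Set (Dom × Dom)

/-- Interpretation of (possibly inverse) roles. -/
def Interp.roleI {Cn Rn : Type} (I : Interp Cn Rn) : SRole Rn → Set (I.Dom × I.Dom)
  | .name r => I.rI r
  | .inv r  => {p | (p.2, p.1) ∈ I.rI r}

/-- Extension of a concept in an interpretation. -/
def Interp.conceptI {Cn Rn : Type} (I : Interp Cn Rn) : Concept Cn Rn → Set I.Dom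
  | .atom a => I.cI a
  | .conj c d => I.conceptI c ∩ I.conceptI d
  | .disj c d => I.conceptI c ∪ I.conceptI d
  | .neg c => (I.conceptI c)ᶜ
  | .ex S c => {x | ∃ y, (x, y) ∈ I.roleI S ∧ y ∈ I.conceptI c}
  | .all S c => {x | ∀ y, (x, y) ∈ I.roleI S → y ∈ I.conceptI c}
  | .atLeast n S c => {x | (n : ℕ∞) ≤ {y | (x, y) ∈ I.roleI S ∧ y ∈ I.conceptI c}.encard}
  | .atMost n S c => {x | {y | (x, y) ∈ I.roleI S ∧ y ∈ I.conceptI c}.encard ≤ (n : ℕ∞)}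

/-- `I` interprets each transitive role name in `Rp` as a transitive relation. -/
def Interp.respectsTrans {Cn Rn : Type} (I : Interp Cn Rn) (Rp : Set Rn) : Prop :=
  ∀ r ∈ Rp, ∀ x y z : I.Dom, (x, y) ∈ I.rI r → (y, z) ∈ I.rI r → (x, z) ∈ I.rI r

/-- A role hierarchy: a set of role inclusion axioms `R ⊑ S`. -/
abbrev RoleHierarchy (Rn : Type) := Set (SRole Rn × SRole Rn)

/-- `I` satisfies the role hierarchy `H`. -/
def Interp.modelsH {Cn Rn : Type} (I : Interp Cn Rn) (H : RoleHierarchy Rn) : Prop :=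
  ∀ p ∈ H, I.roleI p.1 ⊆ I.roleI p.2

/-- The relation `⊑*`: transitive-reflexive closure of `⊑` over `H` together with
the inverse axioms `Inv(R) ⊑ Inv(S)`. -/
def subRole {Rn : Type} (H : RoleHierarchy Rn) : SRole Rn → SRole Rn → Prop :=
  Relation.ReflTransGen (fun R S => (R, S) ∈ H ∨ (R.Inv, S.Inv) ∈ H)

/-- A terminology: a finite list of GCIs `C ⊑ D`. -/
abbrev Terminology (Cn Rn : Type) := List (Concept Cn Rn × Concept Cn Rn)

/-- `I` satisfies the terminology `T`. -/
def Interp.modelsT {Cn Rn : Type} (I : Interp Cn Rn) (T : Terminology Cn Rn) : Prop :=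
  ∀ p ∈ T, I.conceptI p.1 ⊆ I.conceptI p.2

/-- A concept is in negation normal form: negation occurs only in front of concept names. -/
def IsNNF {Cn Rn : Type} : Concept Cn Rn → Prop
  | .atom _ => True
  | .conj c d => IsNNF c ∧ IsNNF d
  | .disj c d => IsNNF c ∧ IsNNF d
  | .neg (.atom _) => True
  | .neg _ => False
  | .ex _ c => IsNNF c
  | .all _ c => IsNNF c
  | .atLeast _ _ c => IsNNF c
  | .atMost _ _ c => IsNNF c

mutual
/-- The NNF of a concept (`a` is a designated concept name used for `¬(≥0 S.C) ↦ A ⊓ ¬A`). -/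
def nnf {Cn Rn : Type} (a : Cn) : Concept Cn Rn → Concept Cn Rn
  | .atom b => .atom b
  | .conj c d => .conj (nnf a c) (nnf a d)
  | .disj c d => .disj (nnf a c) (nnf a d)
  | .neg c => nnfNeg a c
  | .ex S c => .ex S (nnf a c)
  | .all S c => .all S (nnf a c)
  | .atLeast n S c => .atLeast n S (nnf a c)
  | .atMost n S c => .atMost n S (nnf a c)

/-- `∼C`: the NNF of `¬C`, obtained by pushing negation inwards via De Morgan's laws,
`¬∃R.C ↦ ∀R.∼C`, `¬∀R.C ↦ ∃R.∼C`, `¬(≤n S.C) ↦ ≥(n+1) S.C`, `¬(≥(n+1) S.C) ↦ ≤n S.C`,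
and `¬(≥0 S.C) ↦ A ⊓ ¬A`. -/
def nnfNeg {Cn Rn : Type} (a : Cn) : Concept Cn Rn → Concept Cn Rn
  | .atom b => .neg (.atom b)
  | .conj c d => .disj (nnfNeg a c) (nnfNeg a d)
  | .disj c d => .conj (nnfNeg a c) (nnfNeg a d)
  | .neg c => nnf a c
  | .ex S c => .all S (nnfNeg a c)
  | .all S c => .ex S (nnfNeg a c)
  | .atMost n S c => .atLeast (n + 1) S (nnf a c)
  | .atLeast 0 _ _ => .conj (.atom a) (.neg (.atom a))
  | .atLeast (n + 1) S c => .atMost n S (nnf a c)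
end

/-- Immediate subconcept relation. -/
inductive Concept.ImmSub {Cn Rn : Type} : Concept Cn Rn → Concept Cn Rn → Prop where
  | conjL {c d : Concept Cn Rn} : Concept.ImmSub c (.conj c d)
  | conjR {c d : Concept Cn Rn} : Concept.ImmSub d (.conj c d)
  | disjL {c d : Concept Cn Rn} : Concept.ImmSub c (.disj c d)
  | disjR {c d : Concept Cn Rn} : Concept.ImmSub d (.disj c d)
  | negS {c : Concept Cn Rn} : Concept.ImmSub c (.neg c)
  | exS {S : SRole Rn} {c : Concept Cn Rn} : Concept.ImmSub c (.ex S c)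
  | allS {S : SRole Rn} {c : Concept Cn Rn} : Concept.ImmSub c (.all S c)
  | atLeastS {n : ℕ} {S : SRole Rn} {c : Concept Cn Rn} : Concept.ImmSub c (.atLeast n S c)
  | atMostS {n : ℕ} {S : SRole Rn} {c : Concept Cn Rn} : Concept.ImmSub c (.atMost n S c)

/-- Membership in `clos(c)`: the smallest set containing `c` and closed under
subconcepts and the NNF-negation `∼`. -/
inductive InClos {Cn Rn : Type} (a : Cn) (c : Concept Cn Rn) : Concept Cn Rn → Prop where
  | base : InClos a c c
  | sub {d e : Concept Cn Rn} : InClos a c d → Concept.ImmSub e d → InClos a c e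
  | nnfneg {d : Concept Cn Rn} : InClos a c d → InClos a c (nnfNeg a d)

/-- The set of roles occurring in a concept. -/
def Concept.rolesOf {Cn Rn : Type} : Concept Cn Rn → Set (SRole Rn)
  | .atom _ => ∅
  | .conj c d => c.rolesOf ∪ d.rolesOf
  | .disj c d => c.rolesOf ∪ d.rolesOf
  | .neg c => c.rolesOf
  | .ex S c => insert S c.rolesOf
  | .all S c => insert S c.rolesOf
  | .atLeast _ S c => insert S c.rolesOf
  | .atMost _ S c => insert S c.rolesOf

/-- The set of roles occurring in a terminology. -/
def Terminology.rolesOf {Cn Rn : Type} (T : Terminology Cn Rn) : Set (SRole Rn) :=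
  {S | ∃ p ∈ T, S ∈ p.1.rolesOf ∪ p.2.rolesOf}

/-- The set of roles occurring in a role hierarchy. -/
def RoleHierarchy.rolesOf {Rn : Type} (H : RoleHierarchy Rn) : Set (SRole Rn) :=
  {S | ∃ p ∈ H, S = p.1 ∨ S = p.2}

/-- The concept `¬C ⊔ D` corresponding to a GCI `C ⊑ D`. -/
def gciConcept {Cn Rn : Type} (p : Concept Cn Rn × Concept Cn Rn) : Concept Cn Rn :=
  .disj (.neg p.1) p.2

/-- `C_T`: the conjunction of `¬C_i ⊔ D_i` over all GCIs `C_i ⊑ D_i` of `T`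
(for the empty terminology we take the tautology `A ⊔ ¬A`). -/
def CT {Cn Rn : Type} (a : Cn) : Terminology Cn Rn → Concept Cn Rn
  | [] => .disj (.atom a) (.neg (.atom a))
  | [p] => gciConcept p
  | p :: q :: T => .conj (gciConcept p) (CT a (q :: T))

/-- `R_U`: the role hierarchy `H` extended by `R ⊑ U` and `Inv(R) ⊑ U` for every
role `R` in the given set of roles. -/
def addU {Rn : Type} (H : RoleHierarchy Rn) (roles : Set (SRole Rn)) (u : Rn) :
    RoleHierarchy Rn :=
  H ∪ {p | ∃ S ∈ roles, p = (S, SRole.name u) ∨ p = (S.Inv, SRole.name u)}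

/-- Abox assertions: `a : C`, `(a,b) : R`, and `a ≠ b`. -/
inductive Assertion (Cn Rn In : Type) : Type where
  | inst : In → Concept Cn Rn → Assertion Cn Rn In
  | rel  : In → In → SRole Rn → Assertion Cn Rn In
  | neq  : In → In → Assertion Cn Rn In

/-- An Abox: a finite list of assertions. -/
abbrev Abox (Cn Rn In : Type) := List (Assertion Cn Rn In)

/-- `I` (with assignment `ι` of individuals) satisfies an assertion. -/
def Interp.satA {Cn Rn In : Type} (I : Interp Cn Rn) (ι : In → I.Dom) :
    Assertion Cn Rn In → Prop
  | .inst a c => ι a ∈ I.conceptI c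
  | .rel a b S => (ι a, ι b) ∈ I.roleI S
  | .neq a b => ι a ≠ ι b

/-- The individuals occurring in an Abox. -/
def Abox.indsOf {Cn Rn In : Type} (A : Abox Cn Rn In) : List In :=
  A.flatMap (fun φ => match φ with
    | .inst a _ => [a]
    | .rel a b _ => [a, b]
    | .neq a b => [a, b])

/-- The roles occurring in an Abox. -/
def Abox.rolesOf {Cn Rn In : Type} (A : Abox Cn Rn In) : Set (SRole Rn) :=
  {S | ∃ φ ∈ A, (∃ a c, φ = Assertion.inst a c ∧ S ∈ Concept.rolesOf c) ∨
    ∃ a b, φ = Assertion.rel a b S}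

/-- Consistency of an Abox w.r.t. transitive role names `Rp`, a role hierarchy `H`,
and a terminology `T`: some model of `H` and `T` satisfies every assertion of `A`. -/
def AboxConsistent {Cn Rn In : Type} (Rp : Set Rn) (H : RoleHierarchy Rn)
    (T : Terminology Cn Rn) (A : Abox Cn Rn In) : Prop :=
  ∃ (I : Interp Cn Rn) (ι : In → I.Dom), I.respectsTrans Rp ∧ I.modelsT T ∧
    I.modelsH H ∧ ∀ φ ∈ A, I.satA ι φ

/-- `clos(A)`: the union of `clos(C)` over all concept assertions `a : C` in `A`. -/
def closA {Cn Rn In : Type} (a : Cn) (A : Abox Cn Rn In) : Set (Concept Cn Rn) :=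
  {d | ∃ x c, Assertion.inst x c ∈ A ∧ InClos a c d}

/-- `Trans(R)`: the role `R` is transitive (its underlying name is in `Rp`). -/
def SRole.isTrans {Rn : Type} (Rp : Set Rn) (R : SRole Rn) : Prop := R.base ∈ Rp

/-- The raw data of a tableau `T = (S, L, E, I)` for an Abox. -/
structure PreTableau (Cn Rn In : Type) : Type 1 where
  S : Type
  s_nonempty : Nonempty S
  L : S → Set (Concept Cn Rn)
  E : SRole Rn → Set (S × S)
  ι : In → S

/-- The tableau conditions T1–T14 (together with `L s ⊆ clos(A)`), for an Abox `A`
w.r.t. transitive role names `Rp` and role hierarchy `H`; `a0` is the designated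
concept name used by the NNF-negation `∼`. -/
def IsTableau {Cn Rn In : Type} (Rp : Set Rn) (H : RoleHierarchy Rn)
    (A : Abox Cn Rn In) (a0 : Cn) (tb : PreTableau Cn Rn In) : Prop :=
  (∀ s, tb.L s ⊆ closA a0 A) ∧
  -- T1
  (∀ s (C : Concept Cn Rn), C ∈ tb.L s → Concept.neg C ∉ tb.L s) ∧
  -- T2
  (∀ s (C D : Concept Cn Rn), Concept.conj C D ∈ tb.L s → C ∈ tb.L s ∧ D ∈ tb.L s) ∧
  -- T3
  (∀ s (C D : Concept Cn Rn), Concept.disj C D ∈ tb.L s → C ∈ tb.L s ∨ D ∈ tb.L s) ∧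
  -- T4
  (∀ s t (S : SRole Rn) (C : Concept Cn Rn), Concept.all S C ∈ tb.L s →
      (s, t) ∈ tb.E S → C ∈ tb.L t) ∧
  -- T5
  (∀ s (S : SRole Rn) (C : Concept Cn Rn), Concept.ex S C ∈ tb.L s →
      ∃ t, (s, t) ∈ tb.E S ∧ C ∈ tb.L t) ∧
  -- T6
  (∀ s t (S R : SRole Rn) (C : Concept Cn Rn), Concept.all S C ∈ tb.L s →
      (s, t) ∈ tb.E R → subRole H R S → R.isTrans Rp → Concept.all R C ∈ tb.L t) ∧
  -- T7
  (∀ (R : SRole Rn) s t, (s, t) ∈ tb.E R ↔ (t, s) ∈ tb.E R.Inv) ∧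
  -- T8
  (∀ (R S : SRole Rn) s t, (s, t) ∈ tb.E R → subRole H R S → (s, t) ∈ tb.E S) ∧
  -- T9
  (∀ s (n : ℕ) (S : SRole Rn) (C : Concept Cn Rn), Concept.atMost n S C ∈ tb.L s →
      {t | (s, t) ∈ tb.E S ∧ C ∈ tb.L t}.encard ≤ (n : ℕ∞)) ∧
  -- T10
  (∀ s (n : ℕ) (S : SRole Rn) (C : Concept Cn Rn), Concept.atLeast n S C ∈ tb.L s →
      (n : ℕ∞) ≤ {t | (s, t) ∈ tb.E S ∧ C ∈ tb.L t}.encard) ∧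
  -- T11
  (∀ s t (n : ℕ) (S : SRole Rn) (C : Concept Cn Rn),
      (Concept.atMost n S C ∈ tb.L s ∨ Concept.atLeast n S C ∈ tb.L s) →
      (s, t) ∈ tb.E S → C ∈ tb.L t ∨ nnfNeg a0 C ∈ tb.L t) ∧
  -- T12
  (∀ x (c : Concept Cn Rn), Assertion.inst x c ∈ A → c ∈ tb.L (tb.ι x)) ∧
  -- T13
  (∀ x y (R : SRole Rn), Assertion.rel x y R ∈ A → (tb.ι x, tb.ι y) ∈ tb.E R) ∧
  -- T14
  (∀ x y, Assertion.neq x y ∈ A → tb.ι x ≠ tb.ι y)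

/-- The role interpretation induced by a tableau, as the least fixpoint of
`R^I := E(R)⁺` for transitive `R` and `R^I := E(R) ∪ ⋃_{P ⊑* R, P ≠ R} P^I`
for the other roles. -/
inductive IndRole {Cn Rn In : Type} (Rp : Set Rn) (H : RoleHierarchy Rn)
    (tb : PreTableau Cn Rn In) : SRole Rn → tb.S → tb.S → Prop where
  | base {R : SRole Rn} {s t : tb.S} : (s, t) ∈ tb.E R → IndRole Rp H tb R s t
  | tc {R : SRole Rn} {s t u : tb.S} : R.isTrans Rp → IndRole Rp H tb R s t →
      IndRole Rp H tb R t u → IndRole Rp H tb R s u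
  | sub {P R : SRole Rn} {s t : tb.S} : ¬ R.isTrans Rp → subRole H P R → P ≠ R →
      IndRole Rp H tb P s t → IndRole Rp H tb R s t

/-- The interpretation induced by a tableau: `Δ^I := S`, `A^I := {s | A ∈ L(s)}`,
and role names interpreted via `IndRole`. -/
def PreTableau.induced {Cn Rn In : Type} (tb : PreTableau Cn Rn In) (Rp : Set Rn)
    (H : RoleHierarchy Rn) : Interp Cn Rn where
  Dom := tb.S
  dom_nonempty := tb.s_nonempty
  cI a := {s | Concept.atom a ∈ tb.L s}
  rI r := {p | IndRole Rp H tb (SRole.name r) p.1 p.2}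

@[simp]
lemma SRole.Inv_Inv {Rn : Type} (R : SRole Rn) : R.Inv.Inv = R := by
  cases R <;> rfl

lemma SRole.Inv_injective {Rn : Type} : Function.Injective (SRole.Inv (Rn := Rn)) :=
  Function.Involutive.injective SRole.Inv_Inv

lemma SRole.isTrans_Inv {Rn : Type} (Rp : Set Rn) (R : SRole Rn) :
    R.Inv.isTrans Rp ↔ R.isTrans Rp := by
  cases R <;> rfl

lemma subRole.inv {Rn : Type} {H : RoleHierarchy Rn} {P R : SRole Rn}
    (h : subRole H P R) : subRole H P.Inv R.Inv :=
  Relation.ReflTransGen.lift SRole.Inv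
    (fun _ _ hab => hab.elim (fun h => Or.inr (by simpa using h)) Or.inl) _ _ h

section IndRole

variable {Cn Rn In : Type} {Rp : Set Rn} {H : RoleHierarchy Rn} {tb : PreTableau Cn Rn In}

lemma IndRole.inv (hInv : ∀ (R : SRole Rn) s t, (s, t) ∈ tb.E R → (t, s) ∈ tb.E R.Inv)
    {R : SRole Rn} {s t : tb.S} (hst : IndRole Rp H tb R s t) :
    IndRole Rp H tb R.Inv t s := by
  induction hst with
  | base hR => exact .base (hInv _ _ _ hR)
  | tc hTr _ _ ih₁ ih₂ => exact .tc ((SRole.isTrans_Inv Rp _).mpr hTr) ih₂ ih₁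
  | sub hNT hPR hne _ ih =>
      exact .sub (mt (SRole.isTrans_Inv Rp _).mp hNT) hPR.inv
        (mt (SRole.Inv_injective ·) hne) ih

lemma IndRole.inv_iff (hInv : ∀ (R : SRole Rn) s t, (s, t) ∈ tb.E R → (t, s) ∈ tb.E R.Inv)
    {R : SRole Rn} {s t : tb.S} :
    IndRole Rp H tb R.Inv t s ↔ IndRole Rp H tb R s t :=
  ⟨fun h => by simpa using h.inv hInv, IndRole.inv hInv⟩

lemma IndRole.of_subRole
    (hSub : ∀ (R S : SRole Rn) s t, (s, t) ∈ tb.E R → subRole H R S → (s, t) ∈ tb.E S)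
    {R S : SRole Rn} {s t : tb.S} (hRS : subRole H R S) (hst : IndRole Rp H tb R s t) :
    IndRole Rp H tb S s t := by
  induction hst generalizing S with
  | base hR => exact .base (hSub _ _ _ _ hR hRS)
  | @tc R _ _ _ hR h₁ h₂ ih₁ ih₂ =>
      by_cases hS : S.isTrans Rp
      · exact .tc hS (ih₁ hRS) (ih₂ hRS)
      -- `R` is transitive and `S` is not, so `R ≠ S` and `R^I` enters the union defining `S^I`.
      · exact .sub hS hRS (fun he => hS (he ▸ hR)) (.tc hR h₁ h₂)
  | sub _ hPR _ _ ih => exact ih (hPR.trans hRS)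

lemma PreTableau.mem_roleI_induced
    (hInv : ∀ (R : SRole Rn) s t, (s, t) ∈ tb.E R → (t, s) ∈ tb.E R.Inv)
    (R : SRole Rn) (s t : tb.S) :
    (s, t) ∈ (tb.induced Rp H).roleI R ↔ IndRole Rp H tb R s t := by
  cases R with
  | name r => rfl
  | inv r => exact (IndRole.inv_iff (R := .name r) hInv).symm

lemma PreTableau.induced_modelsH
    (hInv : ∀ (R : SRole Rn) s t, (s, t) ∈ tb.E R → (t, s) ∈ tb.E R.Inv)
    (hSub : ∀ (R S : SRole Rn) s t, (s, t) ∈ tb.E R → subRole H R S → (s, t) ∈ tb.E S) :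
    (tb.induced Rp H).modelsH H := by
  intro p hp ⟨s, t⟩ hst
  have hR : IndRole Rp H tb p.1 s t := (mem_roleI_induced hInv _ s t).mp hst
  exact (mem_roleI_induced hInv _ s t).mpr (hR.of_subRole hSub (.single (Or.inl hp)))

end IndRole

/-- in the model constructed from a tableau, role inclusions are
respected: if `R ⊑* S` then `R^I ⊆ S^I`; hence the induced interpretation is a
model of the role hierarchy `H`. -/
theorem induced_respects_role_inclusions {Cn Rn In : Type} (Rp : Set Rn)
    (H : RoleHierarchy Rn) (A : Abox Cn Rn In) (a0 : Cn) (tb : PreTableau Cn Rn In)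
    (h : IsTableau Rp H A a0 tb) :
    (∀ R S : SRole Rn, subRole H R S →
        ∀ s t : tb.S, IndRole Rp H tb R s t → IndRole Rp H tb S s t) ∧
      (tb.induced Rp H).modelsH H := by
  obtain ⟨-, -, -, -, -, -, -, hT7, hT8, -⟩ := h
  exact ⟨fun _ _ hRS _ _ => IndRole.of_subRole hT8 hRS,
    PreTableau.induced_modelsH (fun R s t => (hT7 R s t).mp) hT8⟩

end SHIQ
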